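/- arXiv:2302.07831 — 3 statements merged into one kernel-verified Lean document; each statement's English description precedes it below -/
import Mathlib

section
/- Let N ≥ 2 be an integer, let u0 ∈ C([0,1]) be positive, and let u be a global classical solution of problem (P) with initial data u0. Then min_{r∈[0,1]} u(r,t) → ∞ as t → ∞. -/
open Set Filter Topology Real

/-!
If `0 < ε ≤ 1/2` and the barrier `ε (1 + r² + t)` lies below `u` at `t = 0`, it stays below `u`.
At a first contact time `t₀` and contact point `r₀`, the time derivative gives `u_t ≤ ε`. The
contact cannot happen at `r = 1`: there `u_r = u` exceeds the barrier's slope `2ε`. Elsewhere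
`u_r = 2εr₀` and `u_rr ≥ 2ε`, and the equation forces `u_t > ε` (at `r = 0` in the limiting form
`u_t = N u_rr`). Hence `min u(·, t) ≥ ε (1 + t)`.
-/

/-- A global classical solution of problem (P): the radially symmetric mean curvature flow
`u_t = u_rr/(1+u_r^2) + ((N-1)/r) u_r` on `(0,1) × (0,∞)` with Robin boundary conditions
`u_r(0,t) = 0`, `u_r(1,t) = u(1,t)` and initial data `u0`. The functions `ur`, `urr`, `ut`
represent the partial derivatives of `u`. -/
def IsGlobalClassicalSolution (N : ℕ) (u ur urr ut : ℝ → ℝ → ℝ) (u0 : ℝ → ℝ) : Prop :=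
  ContinuousOn (fun p : ℝ × ℝ => u p.1 p.2) (Icc 0 1 ×ˢ Ici 0) ∧
  ContinuousOn (fun p : ℝ × ℝ => ur p.1 p.2) (Icc 0 1 ×ˢ Ioi 0) ∧
  ContinuousOn (fun p : ℝ × ℝ => urr p.1 p.2) (Icc 0 1 ×ˢ Ioi 0) ∧
  ContinuousOn (fun p : ℝ × ℝ => ut p.1 p.2) (Icc 0 1 ×ˢ Ioi 0) ∧
  (∀ t > (0:ℝ), ∀ r ∈ Icc (0:ℝ) 1, HasDerivWithinAt (fun s => u s t) (ur r t) (Icc 0 1) r) ∧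
  (∀ t > (0:ℝ), ∀ r ∈ Icc (0:ℝ) 1, HasDerivWithinAt (fun s => ur s t) (urr r t) (Icc 0 1) r) ∧
  (∀ t > (0:ℝ), ∀ r ∈ Icc (0:ℝ) 1, HasDerivAt (fun tau => u r tau) (ut r t) t) ∧
  (∀ t > (0:ℝ), ∀ r ∈ Ioo (0:ℝ) 1,
    ut r t = urr r t / (1 + (ur r t) ^ 2) + (((N : ℝ) - 1) / r) * ur r t) ∧
  (∀ t > (0:ℝ), ur 0 t = 0) ∧
  (∀ t > (0:ℝ), ur 1 t = u 1 t) ∧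
  (∀ r ∈ Icc (0:ℝ) 1, u r 0 = u0 r)

theorem hasDerivWithinAt_nonpos_of_isMinOn_Icc_right {f : ℝ → ℝ} {a b f' : ℝ} (hab : a < b)
    (hmin : IsMinOn f (Icc a b) b) (hf : HasDerivWithinAt f f' (Icc a b) b) : f' ≤ 0 := by
  have hcone : a - b ∈ posTangentConeAt (Icc a b) b :=
    sub_mem_posTangentConeAt_of_segment_subset (segment_symm ℝ b a ▸ segment_subset_Icc hab.le)
  have := hmin.localize.hasFDerivWithinAt_nonneg hf.hasFDerivWithinAt hcone
  simp only [ContinuousLinearMap.toSpanSingleton_apply, smul_eq_mul] at this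
  exact nonpos_of_mul_nonneg_right this (sub_neg.mpr hab)

theorem second_deriv_nonneg_of_isMinOn_Icc_left {f f' : ℝ → ℝ} {a b f'' : ℝ} (hab : a < b)
    (hmin : IsMinOn f (Icc a b) a)
    (hf : ∀ x ∈ Icc a b, HasDerivWithinAt f (f' x) (Icc a b) x)
    (hf' : HasDerivWithinAt f' f'' (Icc a b) a) (hf'a : f' a = 0) : 0 ≤ f'' := by
  by_contra! hneg
  have hslope : Tendsto (slope f' a) (𝓝[>] a) (𝓝 f'') := by
    rw [← nhdsWithin_Ioo_eq_nhdsGT hab, ← hasDerivWithinAt_iff_tendsto_slope' (by simp)]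
    exact hf'.mono Ioo_subset_Icc_self
  obtain ⟨c, hac, hc⟩ := mem_nhdsGT_iff_exists_Ioc_subset.mp (hslope.eventually_lt_const hneg)
  set d := min c b
  have had : a < d := lt_min hac hab
  have hdb : Icc a d ⊆ Icc a b := Icc_subset_Icc_right (min_le_right _ _)
  have hf'neg : ∀ x ∈ Ioc a d, f' x < 0 := by
    intro x hx
    have : slope f' a x < 0 := hc ⟨hx.1, hx.2.trans (min_le_left _ _)⟩
    rw [slope_def_field, hf'a, sub_zero] at this
    exact neg_of_div_neg_left this (sub_pos.mpr hx.1).le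
  have hanti : StrictAntiOn f (Icc a d) := by
    refine strictAntiOn_of_hasDerivWithinAt_neg (f' := f') (convex_Icc a d)
      (fun x hx => (hf x (hdb hx)).continuousWithinAt.mono hdb) (fun x hx => ?_) (fun x hx => ?_)
    · rw [interior_Icc] at hx
      exact (hf x (hdb (Ioo_subset_Icc_self hx))).mono (interior_subset.trans hdb)
    · rw [interior_Icc] at hx
      exact hf'neg x (Ioo_subset_Ioc_self hx)
  exact (hanti (left_mem_Icc.mpr had.le) (right_mem_Icc.mpr had.le) had).not_ge
    (hmin (hdb (right_mem_Icc.mpr had.le)))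

theorem exists_first_zero_time {X : Type*} [TopologicalSpace X] [T2Space X] {K : Set X}
    (hK : IsCompact K) {w : X → ℝ → ℝ}
    (hw : ContinuousOn (fun p : X × ℝ => w p.1 p.2) (K ×ˢ Ici 0))
    (h0 : ∀ x ∈ K, 0 < w x 0) {x₁ : X} (hx₁ : x₁ ∈ K) {T : ℝ} (hT : 0 ≤ T) (hx₁T : w x₁ T ≤ 0) :
    ∃ t₀ > 0, ∃ x₀ ∈ K, w x₀ t₀ = 0 ∧ ∀ t ∈ Icc 0 t₀, ∀ x ∈ K, 0 ≤ w x t := by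
  set S := (K ×ˢ Icc 0 T) ∩ (fun p : X × ℝ => w p.1 p.2) ⁻¹' Iic 0
  have hS : IsCompact (Prod.snd '' S) := by
    refine ((hK.prod isCompact_Icc).of_isClosed_subset ?_ inter_subset_left).image
      continuous_snd
    exact (hw.mono (prod_mono_right Icc_subset_Ici_self)).preimage_isClosed_of_isClosed
      (hK.isClosed.prod isClosed_Icc) isClosed_Iic
  obtain ⟨⟨x₀, t₀⟩, ⟨⟨hx₀, ht₀⟩, hwt₀⟩, ht₀S⟩ :=
    hS.sInf_mem ⟨T, (x₁, T), ⟨⟨hx₁, hT, le_rfl⟩, hx₁T⟩, rfl⟩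
  change t₀ = _ at ht₀S
  have hpos : ∀ t ∈ Ico 0 t₀, ∀ x ∈ K, 0 < w x t := by
    intro t ht x hx
    by_contra! hwt
    exact ht.2.not_ge <| ht₀S ▸ csInf_le hS.bddBelow
      ⟨(x, t), ⟨⟨hx, ht.1, ht.2.le.trans ht₀.2⟩, hwt⟩, rfl⟩
  have ht₀pos : 0 < t₀ := ht₀.1.lt_of_ne fun h => (h0 x₀ hx₀).not_ge (h ▸ hwt₀)
  have hnonneg : ∀ x ∈ K, 0 ≤ w x t₀ := by
    intro x hx
    refine ContinuousWithinAt.closure_le (s := Ico 0 t₀) ?_ continuousWithinAt_const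
      ((hw.uncurry_left x hx t₀ ht₀.1).mono Ico_subset_Ici_self) fun s hs => (hpos s hs x hx).le
    rw [closure_Ico ht₀pos.ne]
    exact right_mem_Icc.mpr ht₀.1
  refine ⟨t₀, ht₀pos, x₀, hx₀, le_antisymm hwt₀ (hnonneg x₀ hx₀), fun t ht x hx => ?_⟩
  rcases ht.2.lt_or_eq with hlt | rfl
  · exact (hpos t ⟨ht.1, hlt⟩ x hx).le
  · exact hnonneg x hx

def barrier (ε r t : ℝ) : ℝ := ε * (1 + r ^ 2 + t)

theorem hasDerivAt_barrier_space (ε r t : ℝ) :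
    HasDerivAt (fun s => barrier ε s t) (2 * ε * r) r :=
  ((((hasDerivAt_pow 2 r).const_add 1).add_const t).const_mul ε).congr_deriv (by ring)

theorem hasDerivAt_barrier_time (ε r t : ℝ) : HasDerivAt (barrier ε r) ε t :=
  (((hasDerivAt_id t).const_add (1 + r ^ 2)).const_mul ε).congr_deriv (mul_one ε)

namespace IsGlobalClassicalSolution

variable {N : ℕ} {u ur urr ut : ℝ → ℝ → ℝ} {u0 : ℝ → ℝ}

theorem ut_zero_eq (hu : IsGlobalClassicalSolution N u ur urr ut u0) {t : ℝ} (ht : 0 < t) :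
    ut 0 t = N * urr 0 t := by
  obtain ⟨-, hURc, hURRc, hUTc, -, hDrr, -, hPDE, hBC0, -, -⟩ := hu
  have hIoo : Ioo (0:ℝ) 1 ∈ 𝓝[>] 0 := Ioo_mem_nhdsGT one_pos
  have hlim : ∀ g : ℝ → ℝ → ℝ, ContinuousOn (fun p : ℝ × ℝ => g p.1 p.2) (Icc 0 1 ×ˢ Ioi 0) →
      Tendsto (fun r => g r t) (𝓝[>] 0) (𝓝 (g 0 t)) := fun g hg =>
    ((hg.uncurry_right t ht) 0 (left_mem_Icc.mpr zero_le_one)).mono_left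
      (nhdsWithin_le_of_mem (mem_of_superset hIoo Ioo_subset_Icc_self))
  -- `ur r t / r` is a difference quotient of `ur` at `0`, since `ur 0 t = 0`
  have hquot : Tendsto (fun r => ur r t / r) (𝓝[>] 0) (𝓝 (urr 0 t)) := by
    have := (hasDerivWithinAt_iff_tendsto_slope' (by simp)).mp
      ((hDrr t ht 0 (left_mem_Icc.mpr zero_le_one)).mono Ioo_subset_Icc_self)
    simpa [slope_fun_def_field, hBC0 t ht] using this
  have hrhs : Tendsto (fun r => ut r t) (𝓝[>] 0)
      (𝓝 (urr 0 t / (1 + 0 ^ 2) + (N - 1) * urr 0 t)) := by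
    have hur := hlim ur hURc
    rw [hBC0 t ht] at hur
    refine (((hlim urr hURRc).div (tendsto_const_nhds.add (hur.pow 2)) (by norm_num)).add
      (tendsto_const_nhds.mul hquot)).congr' ?_
    filter_upwards [hIoo] with r hr
    rw [hPDE t ht r hr, Pi.div_apply, mul_div_assoc', div_mul_eq_mul_div]
  rw [tendsto_nhds_unique (hlim ut hUTc) hrhs]
  ring

theorem hasDerivWithinAt_sub_barrier (hu : IsGlobalClassicalSolution N u ur urr ut u0)
    (ε : ℝ) {t : ℝ} (ht : 0 < t) :
    ∀ r ∈ Icc (0:ℝ) 1, HasDerivWithinAt (fun s => u s t - barrier ε s t)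
      (ur r t - 2 * ε * r) (Icc 0 1) r := by
  obtain ⟨-, -, -, -, hDr, -⟩ := hu
  exact fun r hr => (hDr t ht r hr).sub (hasDerivAt_barrier_space ε r t).hasDerivWithinAt

theorem hasDerivWithinAt_ur_sub_barrier (hu : IsGlobalClassicalSolution N u ur urr ut u0)
    (ε : ℝ) {t : ℝ} (ht : 0 < t) :
    ∀ r ∈ Icc (0:ℝ) 1, HasDerivWithinAt (fun s => ur s t - 2 * ε * s)
      (urr r t - 2 * ε) (Icc 0 1) r := by
  obtain ⟨-, -, -, -, -, hDrr, -⟩ := hu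
  exact fun r hr => (hDrr t ht r hr).sub
    (((hasDerivAt_id r).const_mul (2 * ε)).congr_deriv (mul_one _)).hasDerivWithinAt

theorem false_of_isMinOn_sub_barrier_one (hu : IsGlobalClassicalSolution N u ur urr ut u0)
    {ε t : ℝ} (hε : 0 < ε) (ht : 0 < t)
    (hmin : IsMinOn (fun r => u r t - barrier ε r t) (Icc 0 1) 1)
    (hzero : u 1 t = barrier ε 1 t) : False := by
  have hslope := hasDerivWithinAt_nonpos_of_isMinOn_Icc_right one_pos hmin
    (hu.hasDerivWithinAt_sub_barrier ε ht 1 (right_mem_Icc.mpr zero_le_one))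
  obtain ⟨-, -, -, -, -, -, -, -, -, hBC1, -⟩ := hu
  rw [hBC1 t ht, hzero, barrier] at hslope
  nlinarith

theorem lt_ut_of_isMinOn_sub_barrier_zero (hu : IsGlobalClassicalSolution N u ur urr ut u0)
    (hN : 1 ≤ N) {ε t : ℝ} (hε : 0 < ε) (ht : 0 < t)
    (hmin : IsMinOn (fun r => u r t - barrier ε r t) (Icc 0 1) 0) : ε < ut 0 t := by
  have ⟨_, _, _, _, _, _, _, _, hBC0, _⟩ := hu
  have hurr : 0 ≤ urr 0 t - 2 * ε :=
    second_deriv_nonneg_of_isMinOn_Icc_left one_pos hmin (hu.hasDerivWithinAt_sub_barrier ε ht)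
      (hu.hasDerivWithinAt_ur_sub_barrier ε ht 0 (left_mem_Icc.mpr zero_le_one))
      (by simp [hBC0 t ht])
  have hN' : (1:ℝ) ≤ N := by exact_mod_cast hN
  rw [hu.ut_zero_eq ht]
  nlinarith

theorem lt_ut_of_isMinOn_sub_barrier_interior (hu : IsGlobalClassicalSolution N u ur urr ut u0)
    (hN : 1 ≤ N) {ε t r₀ : ℝ} (hε : 0 < ε) (hε' : ε ≤ 1 / 2) (ht : 0 < t) (hr₀ : r₀ ∈ Ioo 0 1)
    (hmin : IsMinOn (fun r => u r t - barrier ε r t) (Icc 0 1) r₀) : ε < ut r₀ t := by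
  have ⟨_, _, _, _, _, _, _, hPDE, _⟩ := hu
  obtain ⟨hr₀0, hr₀1⟩ := hr₀
  have hsub : Icc r₀ 1 ⊆ Icc 0 1 := Icc_subset_Icc_left hr₀0.le
  have hr₀I : r₀ ∈ Icc (0:ℝ) 1 := ⟨hr₀0.le, hr₀1.le⟩
  have hur : ur r₀ t = 2 * ε * r₀ := by
    have := (hmin.isLocalMin (Icc_mem_nhds hr₀0 hr₀1)).hasDerivAt_eq_zero
      ((hu.hasDerivWithinAt_sub_barrier ε ht r₀ hr₀I).hasDerivAt (Icc_mem_nhds hr₀0 hr₀1))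
    linarith
  have hurr : 0 ≤ urr r₀ t - 2 * ε :=
    second_deriv_nonneg_of_isMinOn_Icc_left hr₀1 (hmin.on_subset hsub)
      (fun r hr => (hu.hasDerivWithinAt_sub_barrier ε ht r (hsub hr)).mono hsub)
      ((hu.hasDerivWithinAt_ur_sub_barrier ε ht r₀ hr₀I).mono hsub) (by rw [hur]; ring)
  -- `ε ≤ 1/2` keeps the slope `ur` below `1`, so the curvature term alone exceeds `ε`
  have hcurv : ε < urr r₀ t / (1 + ur r₀ t ^ 2) := by
    have hslope : (2 * ε * r₀) ^ 2 < 1 := pow_lt_one₀ (by positivity) (by nlinarith) two_ne_zero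
    rw [lt_div_iff₀ (by positivity), hur]
    nlinarith
  have hradial : 0 ≤ ((N:ℝ) - 1) / r₀ * ur r₀ t := by
    have hN' : (1:ℝ) ≤ N := by exact_mod_cast hN
    rw [hur]
    exact mul_nonneg (div_nonneg (by linarith) hr₀0.le) (by positivity)
  rw [hPDE t ht r₀ ⟨hr₀0, hr₀1⟩]
  linarith

theorem lt_ut_of_isMinOn_sub_barrier (hu : IsGlobalClassicalSolution N u ur urr ut u0)
    (hN : 1 ≤ N) {ε t r₀ : ℝ} (hε : 0 < ε) (hε' : ε ≤ 1 / 2) (ht : 0 < t) (hr₀ : r₀ ∈ Icc 0 1)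
    (hmin : IsMinOn (fun r => u r t - barrier ε r t) (Icc 0 1) r₀)
    (hzero : u r₀ t = barrier ε r₀ t) : ε < ut r₀ t := by
  rcases hr₀.2.eq_or_lt with rfl | hr₀1
  · exact (hu.false_of_isMinOn_sub_barrier_one hε ht hmin hzero).elim
  rcases hr₀.1.eq_or_lt with rfl | hr₀0
  · exact hu.lt_ut_of_isMinOn_sub_barrier_zero hN hε ht hmin
  · exact hu.lt_ut_of_isMinOn_sub_barrier_interior hN hε hε' ht ⟨hr₀0, hr₀1⟩ hmin

theorem barrier_lt (hu : IsGlobalClassicalSolution N u ur urr ut u0) (hN : 1 ≤ N) {ε : ℝ}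
    (hε : 0 < ε) (hε' : ε ≤ 1 / 2) (h0 : ∀ r ∈ Icc (0:ℝ) 1, barrier ε r 0 < u r 0) :
    ∀ t ≥ 0, ∀ r ∈ Icc (0:ℝ) 1, barrier ε r t < u r t := by
  have ⟨hUc, _, _, _, _, _, hDt, _⟩ := hu
  by_contra! ⟨T, hT, r₁, hr₁, hle⟩
  have hw : ContinuousOn (fun p : ℝ × ℝ => u p.1 p.2 - barrier ε p.1 p.2) (Icc 0 1 ×ˢ Ici 0) :=
    hUc.sub (by unfold barrier; fun_prop)
  obtain ⟨t₀, ht₀, r₀, hr₀, hzero, hnonneg⟩ :=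
    exists_first_zero_time (w := fun r t => u r t - barrier ε r t) isCompact_Icc hw
      (fun r hr => sub_pos.mpr (h0 r hr)) hr₁ hT (sub_nonpos.mpr hle)
  rw [sub_eq_zero] at hzero
  have hut : ut r₀ t₀ - ε ≤ 0 := by
    refine hasDerivWithinAt_nonpos_of_isMinOn_Icc_right ht₀ (fun t ht => ?_)
      ((hDt t₀ ht₀ r₀ hr₀).sub (hasDerivAt_barrier_time ε r₀ t₀)).hasDerivWithinAt
    simpa [hzero] using hnonneg t ht r₀ hr₀
  have hmin : IsMinOn (fun r => u r t₀ - barrier ε r t₀) (Icc 0 1) r₀ := fun r hr => by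
    simpa [hzero] using hnonneg t₀ (right_mem_Icc.mpr ht₀.le) r hr
  linarith [hu.lt_ut_of_isMinOn_sub_barrier hN hε hε' ht₀ hr₀ hmin hzero]

end IsGlobalClassicalSolution

theorem min_tendsto_atTop_general (N : ℕ) (hN : 2 ≤ N) (u0 : ℝ → ℝ)
    (hu0pos : ∀ r ∈ Icc (0:ℝ) 1, 0 < u0 r)
    (u ur urr ut : ℝ → ℝ → ℝ) (hu : IsGlobalClassicalSolution N u ur urr ut u0) :
    Tendsto (fun t => sInf ((fun r => u r t) '' Icc (0:ℝ) 1)) atTop atTop := by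
  have ⟨hUc, _, _, _, _, _, _, _, _, _, hinit⟩ := hu
  obtain ⟨r₀, hr₀, hmin⟩ := isCompact_Icc.exists_isMinOn (nonempty_Icc.mpr zero_le_one)
    (hUc.uncurry_right 0 self_mem_Ici)
  have hm : 0 < u r₀ 0 := hinit r₀ hr₀ ▸ hu0pos r₀ hr₀
  set ε := min (u r₀ 0 / 4) (1 / 2)
  have hε : 0 < ε := lt_min (by positivity) one_half_pos
  have h0 : ∀ r ∈ Icc (0:ℝ) 1, barrier ε r 0 < u r 0 := fun r hr => by
    have : r ^ 2 ≤ 1 := pow_le_one₀ hr.1 hr.2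
    have : ε ≤ u r₀ 0 / 4 := min_le_left _ _
    have : u r₀ 0 ≤ u r 0 := hmin hr
    rw [barrier]
    nlinarith
  have hlower : ∀ t ≥ 0, ε * (1 + t) ≤ sInf ((fun r => u r t) '' Icc (0:ℝ) 1) := fun t ht =>
    le_csInf ((nonempty_Icc.mpr zero_le_one).image _) <| forall_mem_image.mpr fun r hr =>
      (by rw [barrier]; nlinarith [sq_nonneg r] : ε * (1 + t) ≤ barrier ε r t).trans
        (hu.barrier_lt (by omega) hε (min_le_right _ _) h0 t ht r hr).le
  exact tendsto_atTop_mono' atTop (eventually_ge_atTop 0 |>.mono hlower)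
    ((tendsto_atTop_add_const_left atTop 1 tendsto_id).const_mul_atTop hε)

/-- `min_{r ∈ [0,1]} u(r,t) → ∞` as `t → ∞`. -/
theorem min_tendsto_atTop (N : ℕ) (hN : 2 ≤ N) (u0 : ℝ → ℝ)
    (hu0c : ContinuousOn u0 (Icc 0 1)) (hu0pos : ∀ r ∈ Icc (0:ℝ) 1, 0 < u0 r)
    (u ur urr ut : ℝ → ℝ → ℝ) (hu : IsGlobalClassicalSolution N u ur urr ut u0) :
    Tendsto (fun t => sInf ((fun r => u r t) '' Icc (0:ℝ) 1)) atTop atTop :=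
  min_tendsto_atTop_general N hN u0 hu0pos u ur urr ut hu
end

section
/- Let N ≥ 2 be an integer and m0 > 0, and define u̲(r,t) = m0 e^{(r^2-1)/2 + (N-1)t}. Then u̲ is a lower solution of problem (P): for all r ∈ (0,1] and all t ∈ ℝ, ∂_t u̲(r,t) ≤ ∂_{rr} u̲(r,t)/(1+(∂_r u̲(r,t))^2) + ((N-1)/r) ∂_r u̲(r,t); moreover ∂_r u̲(0,t) = 0 and ∂_r u̲(1,t) = u̲(1,t) for all t. -/
open Set Filter Topology Real

/-! The radial derivative of `u̲` is `r u̲`, so the radial term `((N-1)/r) ∂_r u̲` equals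
`(N-1) u̲ = ∂_t u̲` exactly, and the curvature term `∂_rr u̲ / (1 + (∂_r u̲)²)` is nonnegative
because `∂_rr u̲ = (1 + r²) u̲ > 0`. -/

theorem hasDerivAt_const_mul_exp_sq_sub_one_div_two_add (m c r : ℝ) :
    HasDerivAt (fun s : ℝ => m * exp ((s ^ 2 - 1) / 2 + c))
      (r * (m * exp ((r ^ 2 - 1) / 2 + c))) r := by
  have hexponent : HasDerivAt (fun s : ℝ => (s ^ 2 - 1) / 2 + c) r r := by
    simpa using (((hasDerivAt_pow 2 r).sub_const 1).div_const 2).add_const c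
  exact (hexponent.exp.const_mul m).congr_deriv (by ring)

theorem hasDerivAt_const_mul_exp_add_mul (m a k t : ℝ) :
    HasDerivAt (fun τ : ℝ => m * exp (a + k * τ)) (k * (m * exp (a + k * t))) t := by
  have hexponent : HasDerivAt (fun τ : ℝ => a + k * τ) k t := by
    simpa using ((hasDerivAt_id t).const_mul k).const_add a
  exact (hexponent.exp.const_mul m).congr_deriv (by ring)

theorem HasDerivAt.id_mul_of_hasDerivAt_id_mul {f : ℝ → ℝ} {r : ℝ}
    (hf : HasDerivAt f (r * f r) r) :
    HasDerivAt (fun s => s * f s) ((1 + r ^ 2) * f r) r :=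
  ((hasDerivAt_id r).mul hf).congr_deriv (by simp only [id]; ring)

theorem mul_le_curvature_add_radial (k : ℝ) {r u : ℝ} (hr : r ≠ 0) (hu : 0 ≤ u) :
    k * u ≤ (1 + r ^ 2) * u / (1 + (r * u) ^ 2) + k / r * (r * u) := by
  have hradial : k / r * (r * u) = k * u := by field_simp
  have hcurvature : 0 ≤ (1 + r ^ 2) * u / (1 + (r * u) ^ 2) := by positivity
  linarith

theorem lower_solution_general (N : ℕ) (m0 : ℝ) (hm0 : 0 < m0) :
    (∀ r t : ℝ, HasDerivAt (fun s : ℝ => m0 * Real.exp ((s ^ 2 - 1) / 2 + ((N : ℝ) - 1) * t))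
      (r * (m0 * Real.exp ((r ^ 2 - 1) / 2 + ((N : ℝ) - 1) * t))) r) ∧
    (∀ r t : ℝ, HasDerivAt (fun s : ℝ => s * (m0 * Real.exp ((s ^ 2 - 1) / 2 + ((N : ℝ) - 1) * t)))
      ((1 + r ^ 2) * (m0 * Real.exp ((r ^ 2 - 1) / 2 + ((N : ℝ) - 1) * t))) r) ∧
    (∀ r t : ℝ, HasDerivAt (fun tau : ℝ => m0 * Real.exp ((r ^ 2 - 1) / 2 + ((N : ℝ) - 1) * tau))
      (((N : ℝ) - 1) * (m0 * Real.exp ((r ^ 2 - 1) / 2 + ((N : ℝ) - 1) * t))) t) ∧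
    (∀ r ∈ Ioc (0:ℝ) 1, ∀ t : ℝ,
      ((N : ℝ) - 1) * (m0 * Real.exp ((r ^ 2 - 1) / 2 + ((N : ℝ) - 1) * t)) ≤
        (1 + r ^ 2) * (m0 * Real.exp ((r ^ 2 - 1) / 2 + ((N : ℝ) - 1) * t)) /
          (1 + (r * (m0 * Real.exp ((r ^ 2 - 1) / 2 + ((N : ℝ) - 1) * t))) ^ 2) +
        (((N : ℝ) - 1) / r) * (r * (m0 * Real.exp ((r ^ 2 - 1) / 2 + ((N : ℝ) - 1) * t)))) ∧
    (∀ t : ℝ, (0:ℝ) * (m0 * Real.exp (((0:ℝ) ^ 2 - 1) / 2 + ((N : ℝ) - 1) * t)) = 0) ∧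
    (∀ t : ℝ, (1:ℝ) * (m0 * Real.exp (((1:ℝ) ^ 2 - 1) / 2 + ((N : ℝ) - 1) * t)) =
      m0 * Real.exp (((1:ℝ) ^ 2 - 1) / 2 + ((N : ℝ) - 1) * t)) := by
  refine ⟨fun r t => hasDerivAt_const_mul_exp_sq_sub_one_div_two_add _ _ r,
    fun r t => (hasDerivAt_const_mul_exp_sq_sub_one_div_two_add _ _ r).id_mul_of_hasDerivAt_id_mul,
    fun r t => hasDerivAt_const_mul_exp_add_mul _ _ _ t,
    fun r hr t => mul_le_curvature_add_radial _ hr.1.ne' (by positivity),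
    fun t => zero_mul _, fun t => one_mul _⟩

/-- `u̲(r,t) = m0 e^{(r²-1)/2 + (N-1)t}` is a lower solution of problem (P):
its classical partial derivatives satisfy `∂_t u̲ ≤ ∂_rr u̲/(1+(∂_r u̲)²) + ((N-1)/r) ∂_r u̲`
on `(0,1] × ℝ`, together with the boundary relations. -/
theorem lower_solution (N : ℕ) (hN : 2 ≤ N) (m0 : ℝ) (hm0 : 0 < m0) :
    (∀ r t : ℝ, HasDerivAt (fun s : ℝ => m0 * Real.exp ((s ^ 2 - 1) / 2 + ((N : ℝ) - 1) * t))
      (r * (m0 * Real.exp ((r ^ 2 - 1) / 2 + ((N : ℝ) - 1) * t))) r) ∧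
    (∀ r t : ℝ, HasDerivAt (fun s : ℝ => s * (m0 * Real.exp ((s ^ 2 - 1) / 2 + ((N : ℝ) - 1) * t)))
      ((1 + r ^ 2) * (m0 * Real.exp ((r ^ 2 - 1) / 2 + ((N : ℝ) - 1) * t))) r) ∧
    (∀ r t : ℝ, HasDerivAt (fun tau : ℝ => m0 * Real.exp ((r ^ 2 - 1) / 2 + ((N : ℝ) - 1) * tau))
      (((N : ℝ) - 1) * (m0 * Real.exp ((r ^ 2 - 1) / 2 + ((N : ℝ) - 1) * t))) t) ∧
    (∀ r ∈ Ioc (0:ℝ) 1, ∀ t : ℝ,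
      ((N : ℝ) - 1) * (m0 * Real.exp ((r ^ 2 - 1) / 2 + ((N : ℝ) - 1) * t)) ≤
        (1 + r ^ 2) * (m0 * Real.exp ((r ^ 2 - 1) / 2 + ((N : ℝ) - 1) * t)) /
          (1 + (r * (m0 * Real.exp ((r ^ 2 - 1) / 2 + ((N : ℝ) - 1) * t))) ^ 2) +
        (((N : ℝ) - 1) / r) * (r * (m0 * Real.exp ((r ^ 2 - 1) / 2 + ((N : ℝ) - 1) * t)))) ∧
    (∀ t : ℝ, (0:ℝ) * (m0 * Real.exp (((0:ℝ) ^ 2 - 1) / 2 + ((N : ℝ) - 1) * t)) = 0) ∧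
    (∀ t : ℝ, (1:ℝ) * (m0 * Real.exp (((1:ℝ) ^ 2 - 1) / 2 + ((N : ℝ) - 1) * t)) =
      m0 * Real.exp (((1:ℝ) ^ 2 - 1) / 2 + ((N : ℝ) - 1) * t)) :=
  lower_solution_general N m0 hm0
end

section
/- Let N ≥ 2 be an integer, let u0 ∈ C([0,1]) be positive, and let u be a global classical solution of problem (P) with initial data u0. Then for every ε ∈ (0,1), the sup norm of u_r(·,t) on [ε,1] tends to infinity: sup_{r∈[ε,1]} |u_r(r,t)| → ∞ as t → ∞. -/
/-!
The affine function `ψ(r,t) = a + b t + c r` with `0 < a`, `0 ≤ b < c` and `a + c < min u0` is a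
strict subsolution: `ψ_t = b < c ≤ ((N-1)/r) ψ_r` because `N ≥ 2` and `r ≤ 1`. At the first time
`u` touches `ψ` from above, the contact point can be neither `r = 0` (where `ψ_r = c > 0 = u_r`),
nor `r = 1` (where `u_r ≤ c` although `u_r = u = ψ > c`), nor interior (maximum principle).
So `u > ψ`, and the Robin condition turns this into the linear growth `u_r(1,t) = u(1,t) > b t`.
-/

open Set Filter Topology Real

theorem IsMinOn.nonneg_of_hasDerivWithinAt_Icc_left {f : ℝ → ℝ} {a b d : ℝ} (hab : a < b)
    (hmin : IsMinOn f (Icc a b) a) (hf : HasDerivWithinAt f d (Icc a b) a) : 0 ≤ d := by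
  have hcone : b - a ∈ posTangentConeAt (Icc a b) a :=
    sub_mem_posTangentConeAt_of_segment_subset (segment_eq_Icc hab.le ▸ Subset.rfl)
  have := hmin.localize.hasFDerivWithinAt_nonneg hf hcone
  rw [ContinuousLinearMap.toSpanSingleton_apply, smul_eq_mul] at this
  exact nonneg_of_mul_nonneg_right this (sub_pos.2 hab)

theorem IsMinOn.nonpos_of_hasDerivWithinAt_Icc_right {f : ℝ → ℝ} {a b d : ℝ} (hab : a < b)
    (hmin : IsMinOn f (Icc a b) b) (hf : HasDerivWithinAt f d (Icc a b) b) : d ≤ 0 := by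
  have hcone : a - b ∈ posTangentConeAt (Icc a b) b :=
    sub_mem_posTangentConeAt_of_segment_subset (by rw [segment_symm, segment_eq_Icc hab.le])
  have := hmin.localize.hasFDerivWithinAt_nonneg hf hcone
  rw [ContinuousLinearMap.toSpanSingleton_apply, smul_eq_mul] at this
  exact nonpos_of_mul_nonneg_right this (sub_neg.2 hab)

theorem IsLocalMin.nonneg_of_hasDerivAt_of_hasDerivAt {f f' : ℝ → ℝ} {x f'' : ℝ}
    (hmin : IsLocalMin f x) (hf : ∀ᶠ y in 𝓝 x, HasDerivAt f (f' y) y)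
    (hf' : HasDerivAt f' f'' x) : 0 ≤ f'' := by
  by_contra! hneg
  have hzero : f' x = 0 := hmin.hasDerivAt_eq_zero hf.self_of_nhds
  have hsign := eventually_nhdsWithin_sign_eq_of_deriv_neg (hf'.deriv ▸ hneg) hzero
  obtain ⟨a, hxa, hsub⟩ := mem_nhdsGE_iff_exists_Ico_subset.mp <|
    nhdsWithin_le_nhds (hf.and (hmin.and hsign))
  set m := (x + a) / 2
  have hxm : x < m := by simp only [m]; linarith [hxa.out]
  have hIcc : Icc x m ⊆ Ico x a := Icc_subset_Ico_right (by simp only [m]; linarith [hxa.out])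
  obtain ⟨c, hc, hslope⟩ := exists_hasDerivAt_eq_slope f f' hxm
    (fun y hy => ((hsub (hIcc hy)).1.continuousAt).continuousWithinAt)
    (fun y hy => (hsub (hIcc (Ioo_subset_Icc_self hy))).1)
  have hc_neg : f' c < 0 := by
    have := (hsub (hIcc (Ioo_subset_Icc_self hc))).2.2
    rwa [sign_neg (sub_neg.2 hc.1), sign_eq_neg_one_iff] at this
  have hm_ge : f x ≤ f m := (hsub (hIcc (right_mem_Icc.2 hxm.le))).2.1
  rw [hslope] at hc_neg
  exact (div_nonneg (sub_nonneg.2 hm_ge) (sub_pos.2 hxm).le).not_gt hc_neg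

theorem IsCompact.exists_first_zero {X : Type*} [TopologicalSpace X] [T2Space X] {s : Set X}
    (hs : IsCompact s) {w : X × ℝ → ℝ} {T : ℝ} (hT : 0 ≤ T)
    (hw : ContinuousOn w (s ×ˢ Icc 0 T)) (h0 : ∀ x ∈ s, 0 < w (x, 0))
    (hneg : ∃ x ∈ s, w (x, T) ≤ 0) :
    ∃ t₀ ∈ Ioc 0 T, ∃ x₀ ∈ s, w (x₀, t₀) = 0 ∧ ∀ x ∈ s, ∀ t ∈ Icc 0 t₀, 0 ≤ w (x, t) := by
  set K := s ×ˢ Icc 0 T ∩ w ⁻¹' Iic 0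
  have hK : IsCompact K := (hs.prod isCompact_Icc).of_isClosed_subset
    (hw.preimage_isClosed_of_isClosed (hs.prod isCompact_Icc).isClosed isClosed_Iic)
    inter_subset_left
  obtain ⟨x₁, hx₁, hx₁T⟩ := hneg
  obtain ⟨⟨x₀, t₀⟩, ⟨⟨hx₀, ht₀⟩, hw₀⟩, hfirst⟩ :=
    hK.exists_isMinOn ⟨(x₁, T), ⟨hx₁, ⟨hT, le_rfl⟩⟩, hx₁T⟩ continuous_snd.continuousOn
  have hpos : ∀ x ∈ s, ∀ t ∈ Ico 0 t₀, 0 < w (x, t) := fun x hx t ht =>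
    lt_of_not_ge fun hle => ht.2.not_ge <|
      hfirst (show (x, t) ∈ K from ⟨⟨hx, ht.1, ht.2.le.trans ht₀.2⟩, hle⟩)
  have ht₀_pos : 0 < t₀ := ht₀.1.lt_of_ne fun h => (h0 x₀ hx₀).not_ge (h ▸ hw₀)
  have hnonneg : ∀ x ∈ s, 0 ≤ w (x, t₀) := by
    intro x hx
    have hcont : ContinuousWithinAt (fun t => w (x, t)) (Ico 0 t₀) t₀ :=
      ((hw (x, t₀) ⟨hx, ht₀⟩).comp (Continuous.prodMk_right x).continuousWithinAt
        fun t ht => ⟨hx, ht.1, ht.2.le.trans ht₀.2⟩)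
    have : (𝓝[Ico 0 t₀] t₀).NeBot := right_nhdsWithin_Ico_neBot ht₀_pos
    exact ge_of_tendsto hcont (eventually_nhdsWithin_of_forall fun t ht => (hpos x hx t ht).le)
  refine ⟨t₀, ⟨ht₀_pos, ht₀.2⟩, x₀, hx₀, le_antisymm hw₀ (hnonneg x₀ hx₀), ?_⟩
  intro x hx t ht
  rcases ht.2.lt_or_eq with hlt | rfl
  · exact (hpos x hx t ⟨ht.1, hlt⟩).le
  · exact hnonneg x hx

namespace IsGlobalClassicalSolution

variable {N : ℕ} {u ur urr ut : ℝ → ℝ → ℝ} {u0 : ℝ → ℝ} {a b c : ℝ}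

theorem hasDerivWithinAt_sub_affine (hu : IsGlobalClassicalSolution N u ur urr ut u0) {t : ℝ}
    (ht : 0 < t) {r : ℝ} (hr : r ∈ Icc 0 1) :
    HasDerivWithinAt (fun r => u r t - (a + b * t + c * r)) (ur r t - c) (Icc 0 1) r := by
  obtain ⟨-, -, -, -, hdr, -⟩ := hu
  simpa using (hdr t ht r hr).fun_sub
    (((hasDerivWithinAt_id r _).const_mul c).const_add _)

theorem mem_Ioo_of_isMinOn_sub_affine (hu : IsGlobalClassicalSolution N u ur urr ut u0)
    (ha : 0 < a) (hb : 0 ≤ b) (hc : 0 < c) {r₀ t₀ : ℝ} (ht₀ : 0 < t₀) (hr₀ : r₀ ∈ Icc 0 1)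
    (hzero : u r₀ t₀ = a + b * t₀ + c * r₀)
    (hmin : IsMinOn (fun r => u r t₀ - (a + b * t₀ + c * r)) (Icc 0 1) r₀) :
    r₀ ∈ Ioo 0 1 := by
  have hderiv := hu.hasDerivWithinAt_sub_affine (a := a) (b := b) (c := c) ht₀ hr₀
  obtain ⟨-, -, -, -, -, -, -, -, hbc0, hbc1, -⟩ := hu
  rcases hr₀.1.eq_or_lt with rfl | hr₀_pos
  · have := hmin.nonneg_of_hasDerivWithinAt_Icc_left one_pos hderiv
    linarith [hbc0 t₀ ht₀]
  rcases hr₀.2.eq_or_lt with rfl | hr₀_lt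
  · have := hmin.nonpos_of_hasDerivWithinAt_Icc_right one_pos hderiv
    nlinarith [hbc1 t₀ ht₀]
  exact ⟨hr₀_pos, hr₀_lt⟩

theorem false_of_touch_affine (hN : 2 ≤ N) (hu : IsGlobalClassicalSolution N u ur urr ut u0)
    (ha : 0 < a) (hb : 0 ≤ b) (hbc : b < c) {r₀ t₀ : ℝ} (ht₀ : 0 < t₀) (hr₀ : r₀ ∈ Icc 0 1)
    (hzero : u r₀ t₀ = a + b * t₀ + c * r₀)
    (hle : ∀ r ∈ Icc 0 1, ∀ t ∈ Icc 0 t₀, a + b * t + c * r ≤ u r t) : False := by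
  have hspace : IsMinOn (fun r => u r t₀ - (a + b * t₀ + c * r)) (Icc 0 1) r₀ :=
    isMinOn_iff.2 fun r hr => by
      rw [hzero, sub_self, sub_nonneg]
      exact hle r hr t₀ ⟨ht₀.le, le_rfl⟩
  have htime : IsMinOn (fun t => u r₀ t - (a + b * t + c * r₀)) (Icc 0 t₀) t₀ :=
    isMinOn_iff.2 fun t ht => by
      rw [hzero, sub_self, sub_nonneg]
      exact hle r₀ hr₀ t ht
  obtain ⟨hr₀_pos, hr₀_lt⟩ :=
    hu.mem_Ioo_of_isMinOn_sub_affine ha hb (hb.trans_lt hbc) ht₀ hr₀ hzero hspace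
  have hnhds : Icc (0 : ℝ) 1 ∈ 𝓝 r₀ := Icc_mem_nhds hr₀_pos hr₀_lt
  have hmin := hspace.isLocalMin hnhds
  have hderiv : ∀ᶠ r in 𝓝 r₀, HasDerivAt (fun r => u r t₀ - (a + b * t₀ + c * r))
      (ur r t₀ - c) r := by
    filter_upwards [hnhds, interior_mem_nhds.2 hnhds] with r hr hr'
    exact (hu.hasDerivWithinAt_sub_affine ht₀ hr).hasDerivAt (mem_interior_iff_mem_nhds.1 hr')
  obtain ⟨-, -, -, -, -, hdr2, hdt, hpde, -⟩ := hu
  have hur : ur r₀ t₀ = c := sub_eq_zero.1 (hmin.hasDerivAt_eq_zero hderiv.self_of_nhds)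
  have hurr : 0 ≤ urr r₀ t₀ := hmin.nonneg_of_hasDerivAt_of_hasDerivAt hderiv
    (((hdr2 t₀ ht₀ r₀ hr₀).hasDerivAt hnhds).sub_const c)
  have hut : ut r₀ t₀ - b ≤ 0 := htime.nonpos_of_hasDerivWithinAt_Icc_right ht₀ <| by
    simpa using ((hdt t₀ ht₀ r₀ hr₀).fun_sub
      (((hasDerivAt_id t₀).const_mul b).const_add a |>.add_const (c * r₀))).hasDerivWithinAt
  have hradial : c ≤ ((N : ℝ) - 1) / r₀ * c := by
    have : (1 : ℝ) ≤ ((N : ℝ) - 1) / r₀ := by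
      rw [le_div_iff₀ hr₀_pos]
      have : (2 : ℝ) ≤ N := by exact_mod_cast hN
      linarith
    nlinarith
  have := hpde t₀ ht₀ r₀ ⟨hr₀_pos, hr₀_lt⟩
  rw [hur] at this
  have : 0 ≤ urr r₀ t₀ / (1 + c ^ 2) := by positivity
  linarith

theorem affine_lt (hN : 2 ≤ N) (hu : IsGlobalClassicalSolution N u ur urr ut u0)
    (ha : 0 < a) (hb : 0 ≤ b) (hbc : b < c) (hu0 : ∀ r ∈ Icc 0 1, a + c < u0 r)
    {t r : ℝ} (ht : 0 ≤ t) (hr : r ∈ Icc 0 1) : a + b * t + c * r < u r t := by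
  by_contra! hle
  have hcont : ContinuousOn (fun p : ℝ × ℝ => u p.1 p.2 - (a + b * p.2 + c * p.1))
      (Icc 0 1 ×ˢ Icc 0 t) :=
    (hu.1.mono (prod_mono_right Icc_subset_Ici_self)).sub (by fun_prop)
  have hinit : ∀ r ∈ Icc (0 : ℝ) 1, 0 < u r 0 - (a + b * 0 + c * r) := fun r hr => by
    obtain ⟨-, -, -, -, -, -, -, -, -, -, hinit⟩ := hu
    rw [hinit r hr]
    nlinarith [hu0 r hr, hr.2]
  obtain ⟨t₀, ht₀, r₀, hr₀, hzero, hnonneg⟩ :=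
    isCompact_Icc.exists_first_zero ht hcont hinit ⟨r, hr, sub_nonpos.2 hle⟩
  exact hu.false_of_touch_affine hN ha hb hbc ht₀.1 hr₀ (sub_eq_zero.1 hzero)
    fun r hr t ht => sub_nonneg.1 (hnonneg r hr t ht)

theorem exists_pos_le_initial (hu : IsGlobalClassicalSolution N u ur urr ut u0)
    (hu0 : ∀ r ∈ Icc 0 1, 0 < u0 r) : ∃ δ > 0, ∀ r ∈ Icc 0 1, δ ≤ u0 r := by
  obtain ⟨hcont_u, -, -, -, -, -, -, -, -, -, hinit⟩ := hu
  have hcont : ContinuousOn (fun r => u r 0) (Icc 0 1) :=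
    hcont_u.comp (Continuous.prodMk_left 0).continuousOn fun r hr => ⟨hr, self_mem_Ici⟩
  obtain ⟨r₀, hr₀, hmin⟩ := isCompact_Icc.exists_isMinOn (nonempty_Icc.2 zero_le_one) hcont
  refine ⟨u0 r₀, hu0 r₀ hr₀, fun r hr => ?_⟩
  rw [← hinit r₀ hr₀, ← hinit r hr]
  exact hmin hr

theorem exists_pos_mul_lt_ur_one (hN : 2 ≤ N) (hu : IsGlobalClassicalSolution N u ur urr ut u0)
    (hu0 : ∀ r ∈ Icc 0 1, 0 < u0 r) : ∃ κ > 0, ∀ t > 0, κ * t < ur 1 t := by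
  obtain ⟨δ, hδ, hδu0⟩ := hu.exists_pos_le_initial hu0
  refine ⟨δ / 6, by positivity, fun t ht => ?_⟩
  calc δ / 6 * t ≤ δ / 3 + δ / 6 * t + δ / 3 * 1 := by linarith
    _ < u 1 t := hu.affine_lt hN (by positivity) (by positivity) (by linarith)
        (fun r hr => by linarith [hδu0 r hr]) ht.le ⟨zero_le_one, le_rfl⟩
    _ = ur 1 t := by
      obtain ⟨-, -, -, -, -, -, -, -, -, hbc1, -⟩ := hu
      exact (hbc1 t ht).symm

theorem bddAbove_abs_ur (hu : IsGlobalClassicalSolution N u ur urr ut u0) {s : Set ℝ}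
    (hs : IsCompact s) (hs01 : s ⊆ Icc 0 1) {t : ℝ} (ht : 0 < t) :
    BddAbove ((fun r => |ur r t|) '' s) :=
  hs.bddAbove_image <| (hu.2.1.comp (Continuous.prodMk_left t).continuousOn
    fun _ hr => ⟨hs01 hr, ht⟩).abs

end IsGlobalClassicalSolution

theorem sup_ur_tendsto_atTop_general (N : ℕ) (hN : 2 ≤ N) (u0 : ℝ → ℝ)
    (hu0pos : ∀ r ∈ Icc (0:ℝ) 1, 0 < u0 r)
    (u ur urr ut : ℝ → ℝ → ℝ) (hu : IsGlobalClassicalSolution N u ur urr ut u0) :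
    ∀ ε ∈ Ioo (0:ℝ) 1,
      Tendsto (fun t => sSup ((fun r => |ur r t|) '' Icc ε 1)) atTop atTop := by
  intro ε hε
  obtain ⟨κ, hκ, hgrowth⟩ := hu.exists_pos_mul_lt_ur_one hN hu0pos
  refine tendsto_atTop_mono' atTop ((eventually_gt_atTop 0).mono fun t ht => ?_)
    (tendsto_id.const_mul_atTop hκ)
  calc κ * t ≤ |ur 1 t| := (hgrowth t ht).le.trans (le_abs_self _)
    _ ≤ sSup ((fun r => |ur r t|) '' Icc ε 1) :=
      le_csSup (hu.bddAbove_abs_ur isCompact_Icc (Icc_subset_Icc_left hε.1.le) ht)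
        (mem_image_of_mem _ ⟨hε.2.le, le_rfl⟩)

/-- for every `ε ∈ (0,1)`, `sup_{r ∈ [ε,1]} |u_r(r,t)| → ∞` as `t → ∞`. -/
theorem sup_ur_tendsto_atTop (N : ℕ) (hN : 2 ≤ N) (u0 : ℝ → ℝ)
    (hu0c : ContinuousOn u0 (Icc 0 1)) (hu0pos : ∀ r ∈ Icc (0:ℝ) 1, 0 < u0 r)
    (u ur urr ut : ℝ → ℝ → ℝ) (hu : IsGlobalClassicalSolution N u ur urr ut u0) :
    ∀ ε ∈ Ioo (0:ℝ) 1,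
      Tendsto (fun t => sSup ((fun r => |ur r t|) '' Icc ε 1)) atTop atTop :=
  sup_ur_tendsto_atTop_general N hN u0 hu0pos u ur urr ut hu
end
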